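/- Under the same hypotheses, if (x(t), π(t)) is any solution of Hamilton's equations for h = (1/2)|π|² + V + Q_ψ, then δπ(t) := π(t) − p_B(x(t),t) satisfies the linear ODE d(δπ_j)/dt = −Σ_k ∂_k p_{B,j}(x(t),t)·δπ_k(t). In particular if π(0) = p_B(x(0),0) then π(t) = p_B(x(t),t) for all t. -/

import Mathlib

/-!
Write `u_v = ∂_v ψ / ψ` for the logarithmic derivative of `ψ` along a space-time direction `v`
(`logFDeriv`), so that `p_B = Im u` on spatial directions and `Re u = ∂ log |ψ|`. Since
`∂_w u_v = ∂_w ∂_v ψ / ψ - u_v u_w` is symmetric in `v, w`, the field `p_B` is curl-free and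
`∂_t p_B = ∇ Im u_t`. Dividing the Schrödinger equation by `ψ` and taking real parts gives the
quantum Hamilton–Jacobi equation `V + Q = -(Im u_t + |p_B|² / 2)`. Along a solution of Hamilton's
equations these identities cancel every term of `d/dt (π - p_B(x, t))` except the linear one, and a
solution of a linear ODE with continuous coefficients that vanishes at one time vanishes
identically (Grönwall).
-/

open Complex Function Finset

section Slice

variable {E F G : Type*} [NormedAddCommGroup E] [NormedSpace ℝ E] [NormedAddCommGroup F]
  [NormedSpace ℝ F] [NormedAddCommGroup G] [NormedSpace ℝ G] {x : E} {t : F}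

theorem fderiv_slice_left_apply {f : E → F → G} (hf : DifferentiableAt ℝ (uncurry f) (x, t))
    (v : E) : fderiv ℝ (fun y => f y t) x v = fderiv ℝ (uncurry f) (x, t) (v, 0) := by
  rw [show (fun y => f y t) = uncurry f ∘ fun y => (y, t) from rfl,
    (hf.hasFDerivAt.comp x (hasFDerivAt_prodMk_left x t)).fderiv]
  rfl

theorem fderiv_fderiv_slice_left_apply {f : E → F → G} (hf : ContDiff ℝ 2 (uncurry f))
    (v w : E) :
    fderiv ℝ (fun y => fderiv ℝ (fun z => f z t) y v) x w
      = fderiv ℝ (fun q => fderiv ℝ (uncurry f) q (v, 0)) (x, t) (w, 0) := by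
  have hf' : Differentiable ℝ fun q => fderiv ℝ (uncurry f) q (v, 0) :=
    ((hf.fderiv_right (m := 1) (by norm_num)).clm_apply contDiff_const).differentiable one_ne_zero
  simp_rw [fderiv_slice_left_apply (hf.differentiable two_ne_zero _)]
  exact fderiv_slice_left_apply (f := fun y s => fderiv ℝ (uncurry f) (y, s) (v, 0)) (hf' _) w

theorem deriv_slice_right {f : E → ℝ → G} {t : ℝ}
    (hf : DifferentiableAt ℝ (uncurry f) (x, t)) :
    deriv (fun s => f x s) t = fderiv ℝ (uncurry f) (x, t) (0, 1) := by
  rw [show (fun s => f x s) = uncurry f ∘ fun s => (x, s) from rfl,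
    (hf.hasFDerivAt.comp_hasDerivAt t ((hasDerivAt_const t x).prodMk (hasDerivAt_id t))).deriv]

end Slice

section LogFDeriv

variable {E : Type*} [NormedAddCommGroup E] [NormedSpace ℝ E] {f : E → ℂ} {p : E}

theorem fderiv_re_apply {g : E → ℂ} (hg : DifferentiableAt ℝ g p) (v : E) :
    fderiv ℝ (fun q => (g q).re) p v = (fderiv ℝ g p v).re := by
  have h : HasFDerivAt (fun q => (g q).re) _ p := reCLM.hasFDerivAt.comp p hg.hasFDerivAt
  rw [h.fderiv]
  rfl

theorem fderiv_im_apply {g : E → ℂ} (hg : DifferentiableAt ℝ g p) (v : E) :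
    fderiv ℝ (fun q => (g q).im) p v = (fderiv ℝ g p v).im := by
  have h : HasFDerivAt (fun q => (g q).im) _ p := imCLM.hasFDerivAt.comp p hg.hasFDerivAt
  rw [h.fderiv]
  rfl

noncomputable def logFDeriv (f : E → ℂ) (v p : E) : ℂ := fderiv ℝ f p v / f p

theorem ContDiff.logFDeriv {m n : WithTop ℕ∞} (hf : ContDiff ℝ n f) (hmn : m + 1 ≤ n)
    (hne : ∀ p, f p ≠ 0) (v : E) : ContDiff ℝ m (logFDeriv f v) :=
  ((hf.fderiv_right hmn).clm_apply contDiff_const).mul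
    ((hf.of_le (le_self_add.trans hmn)).inv hne)

theorem differentiable_logFDeriv (hf : ContDiff ℝ 2 f) (hne : ∀ p, f p ≠ 0) (v : E) :
    Differentiable ℝ (logFDeriv f v) :=
  (hf.logFDeriv (m := 1) (by norm_num) hne v).differentiable one_ne_zero

theorem hasFDerivAt_fderiv_apply_const (hf : DifferentiableAt ℝ (fderiv ℝ f) p) (v : E) :
    HasFDerivAt (fun q => fderiv ℝ f q v) ((fderiv ℝ (fderiv ℝ f) p).flip v) p := by
  simpa using hf.hasFDerivAt.clm_apply (hasFDerivAt_const v p)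

theorem fderiv_logFDeriv_apply (hf : ContDiffAt ℝ 2 f p) (hp : f p ≠ 0) (v w : E) :
    fderiv ℝ (logFDeriv f v) p w
      = fderiv ℝ (fderiv ℝ f) p w v / f p - logFDeriv f v p * logFDeriv f w p := by
  have hD : HasFDerivAt (fun q => fderiv ℝ f q v) ((fderiv ℝ (fderiv ℝ f) p).flip v) p :=
    hasFDerivAt_fderiv_apply_const ((hf.fderiv_right le_rfl).differentiableAt one_ne_zero) v
  have hinv : HasFDerivAt (fun q => (f q)⁻¹)
      ((-ContinuousLinearMap.mulLeftRight ℝ ℂ (f p)⁻¹ (f p)⁻¹).comp (fderiv ℝ f p)) p :=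
    (hasFDerivAt_inv' hp).comp p (hf.differentiableAt two_ne_zero).hasFDerivAt
  rw [show logFDeriv f v = fun q => fderiv ℝ f q v * (f q)⁻¹ from rfl,
    (hD.fun_mul hinv).fderiv]
  simp only [ContinuousLinearMap.neg_comp, smul_neg, add_apply, neg_apply, smul_apply,
    ContinuousLinearMap.comp_apply, ContinuousLinearMap.mulLeftRight_apply, smul_eq_mul,
    ContinuousLinearMap.flip_apply, logFDeriv]
  field_simp
  ring

theorem fderiv_logFDeriv_comm (hf : ContDiffAt ℝ 2 f p) (hp : f p ≠ 0) (v w : E) :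
    fderiv ℝ (logFDeriv f v) p w = fderiv ℝ (logFDeriv f w) p v := by
  rw [fderiv_logFDeriv_apply hf hp, fderiv_logFDeriv_apply hf hp,
    hf.isSymmSndFDerivAt (by simp) w v, mul_comm]

theorem fderiv_fderiv_apply_self (hf : ContDiffAt ℝ 2 f p) (hp : f p ≠ 0) (v : E) :
    fderiv ℝ (fun q => fderiv ℝ f q v) p v
      = f p * (fderiv ℝ (logFDeriv f v) p v + logFDeriv f v p ^ 2) := by
  rw [(hasFDerivAt_fderiv_apply_const
      ((hf.fderiv_right le_rfl).differentiableAt one_ne_zero) v).fderiv,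
    fderiv_logFDeriv_apply hf hp, ContinuousLinearMap.flip_apply]
  field_simp
  ring

theorem fderiv_norm_apply (hf : DifferentiableAt ℝ f p) (hp : f p ≠ 0) (v : E) :
    fderiv ℝ (fun q => ‖f q‖) p v = ‖f p‖ * (logFDeriv f v p).re := by
  have h := congrArg (· v) (hf.hasFDerivAt.norm_sq.unique ((hf.norm ℂ hp).hasFDerivAt.pow 2))
  have hN : ‖f p‖ ≠ 0 := norm_ne_zero_iff.mpr hp
  simp only [smul_apply, ContinuousLinearMap.comp_apply, innerSL_apply_apply, Complex.inner,
    mul_re, conj_re, conj_im, nsmul_eq_mul, Nat.cast_ofNat, pow_one, Nat.add_one_sub_one,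
    smul_eq_mul] at h
  rw [logFDeriv, Complex.div_re, Complex.normSq_eq_norm_sq]
  field_simp
  linear_combination -h / 2

theorem fderiv_fderiv_norm_apply_self (hf : ContDiff ℝ 2 f) (hne : ∀ q, f q ≠ 0) (p v : E) :
    fderiv ℝ (fun q => fderiv ℝ (fun q => ‖f q‖) q v) p v
      = ‖f p‖ * ((fderiv ℝ (logFDeriv f v) p v).re + (logFDeriv f v p).re ^ 2) := by
  have hf1 : Differentiable ℝ f := hf.differentiable two_ne_zero
  have hu := differentiable_logFDeriv hf hne v
  have hre : DifferentiableAt ℝ (fun q => (logFDeriv f v q).re) p :=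
    reCLM.differentiableAt.comp p (hu p)
  simp_rw [fderiv_norm_apply (hf1 _) (hne _)]
  rw [fderiv_fun_mul ((hf1 p).norm ℂ (hne p)) hre, add_apply, smul_apply, smul_apply,
    smul_eq_mul, smul_eq_mul, fderiv_re_apply (hu p), fderiv_norm_apply (hf1 p) (hne p)]
  ring

theorem fderiv_im_logFDeriv_comm (hf : ContDiff ℝ 2 f) (hne : ∀ q, f q ≠ 0) (v w : E) :
    fderiv ℝ (fun q => (logFDeriv f v q).im) p w
      = fderiv ℝ (fun q => (logFDeriv f w q).im) p v := by
  rw [fderiv_im_apply (differentiable_logFDeriv hf hne v p),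
    fderiv_im_apply (differentiable_logFDeriv hf hne w p),
    fderiv_logFDeriv_comm hf.contDiffAt (hne p)]

end LogFDeriv

theorem eq_zero_of_hasDerivAt_clm_apply {E : Type*} [NormedAddCommGroup E] [NormedSpace ℝ E]
    {A : ℝ → E →L[ℝ] E} (hA : Continuous A) {g : ℝ → E}
    (hg : ∀ t, HasDerivAt g (A t (g t)) t) {t₀ : ℝ} (h₀ : g t₀ = 0) : g = 0 := by
  funext t
  set a := min t t₀ - 1
  set b := max t t₀ + 1
  obtain ⟨C, hC⟩ :=
    (isCompact_Icc (a := a) (b := b)).exists_bound_of_continuousOn hA.continuousOn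
  have hlip : ∀ τ ∈ Set.Ioo a b, LipschitzOnWith C.toNNReal (fun y => A τ y) Set.univ :=
    fun τ hτ => ((A τ).lipschitz.weaken (by
      rw [← NNReal.coe_le_coe, coe_nnnorm, Real.coe_toNNReal']
      exact (hC τ (Set.Ioo_subset_Icc_self hτ)).trans (le_max_left _ _))).lipschitzOnWith
  have hzero : ∀ τ, HasDerivAt (0 : ℝ → E) (A τ ((0 : ℝ → E) τ)) τ := by simp
  refine ODE_solution_unique_of_mem_Ioo hlip (t₀ := t₀) ?_ (fun τ _ => ⟨hg τ, trivial⟩)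
    (fun τ _ => ⟨hzero τ, trivial⟩) h₀ ?_
  · constructor <;> simp only [a, b] <;> linarith [min_le_right t t₀, le_max_right t t₀]
  · constructor <;> simp only [a, b] <;> linarith [min_le_left t t₀, le_max_left t t₀]

theorem eq_zero_of_hasDerivAt_mulVec {ι : Type*} [Fintype ι] [DecidableEq ι]
    {A : ℝ → Matrix ι ι ℝ} (hA : Continuous A) {g : ℝ → ι → ℝ}
    (hg : ∀ t, HasDerivAt g ((A t).mulVec (g t)) t) {t₀ : ℝ} (h₀ : g t₀ = 0) : g = 0 := by
  let L : Matrix ι ι ℝ ≃ₗ[ℝ] ((ι → ℝ) →L[ℝ] (ι → ℝ)) :=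
    Matrix.toLin'.trans LinearMap.toContinuousLinearMap
  exact eq_zero_of_hasDerivAt_clm_apply (A := fun t => L (A t))
    (L.toLinearMap.continuous_of_finiteDimensional.comp hA) hg h₀

section HamiltonFlow

variable {n : ℕ}

-- `hcurl` and `hWπ` are the equality of mixed partials for `π = ∇ₓ S` and `W = ∂ₜ S`.
theorem hasDerivAt_mom_sub_of_hamilton {W : (Fin n → ℝ) × ℝ → ℝ}
    {π : Fin n → (Fin n → ℝ) × ℝ → ℝ} {x mom : ℝ → Fin n → ℝ} {t : ℝ}
    {j : Fin n}
    (hW : DifferentiableAt ℝ W (x t, t)) (hπ : ∀ k, DifferentiableAt ℝ (π k) (x t, t))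
    (hcurl : ∀ k, fderiv ℝ (π j) (x t, t) (Pi.single k 1, 0)
      = fderiv ℝ (π k) (x t, t) (Pi.single j 1, 0))
    (hWπ : fderiv ℝ W (x t, t) (Pi.single j 1, 0) = fderiv ℝ (π j) (x t, t) (0, 1))
    (hx : ∀ k, HasDerivAt (fun s => x s k) (mom t k) t)
    (hmom : HasDerivAt (fun s => mom s j)
      (fderiv ℝ (fun q => W q + (1 / 2) * ∑ k, π k q ^ 2) (x t, t) (Pi.single j 1, 0)) t) :
    HasDerivAt (fun s => mom s j - π j (x s, s))
      (-∑ k, fderiv ℝ (π j) (x t, t) (Pi.single k 1, 0) * (mom t k - π k (x t, t))) t := by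
  have hH : fderiv ℝ (fun q => W q + (1 / 2) * ∑ k, π k q ^ 2) (x t, t) (Pi.single j 1, 0)
      = fderiv ℝ W (x t, t) (Pi.single j 1, 0)
        + ∑ k, π k (x t, t) * fderiv ℝ (π k) (x t, t) (Pi.single j 1, 0) := by
    have h := hW.hasFDerivAt.fun_add
      ((HasFDerivAt.fun_sum (u := univ) fun k _ => (hπ k).hasFDerivAt.pow 2).const_mul (1 / 2))
    rw [h.fderiv]
    simp only [Nat.add_one_sub_one, pow_one, nsmul_eq_mul, Nat.cast_ofNat, add_apply, smul_apply,
      _root_.sum_apply, smul_eq_mul, mul_sum, add_right_inj]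
    exact sum_congr rfl fun k _ => by ring
  have hcurve : HasDerivAt (fun s => (x s, s)) (mom t, 1) t :=
    (hasDerivAt_pi.2 hx).prodMk (hasDerivAt_id t)
  have hflow := (hπ j).hasFDerivAt.comp_hasDerivAt (f := fun s => (x s, s)) t hcurve
  have hsplit : fderiv ℝ (π j) (x t, t) (mom t, 1)
      = ∑ k, mom t k * fderiv ℝ (π j) (x t, t) (Pi.single k 1, 0)
        + fderiv ℝ (π j) (x t, t) (0, 1) := by
    have hv : ((mom t, 1) : (Fin n → ℝ) × ℝ)
        = ∑ k, mom t k • (Pi.single k 1, 0) + (0, 1) := by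
      ext i <;> simp [Prod.fst_sum, Prod.snd_sum, Pi.single_apply]
    rw [hv, map_add, map_sum]
    simp only [map_smul, smul_eq_mul]
  refine (hmom.sub hflow).congr_deriv ?_
  rw [hH, hsplit, hWπ]
  simp only [hcurl, mul_sub, sum_sub_distrib, mul_comm _ (mom t _),
    mul_comm _ (π _ (x t, t))]
  ring

end HamiltonFlow

section Schrodinger

variable {n : ℕ} {ψ : (Fin n → ℝ) → ℝ → ℂ}

theorem laplacian_eq_mul_sum_logFDeriv (hψ : ContDiff ℝ 2 (uncurry ψ))
    (hne : ∀ x t, ψ x t ≠ 0) (x : Fin n → ℝ) (t : ℝ) :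
    ∑ j : Fin n,
        fderiv ℝ (fun y => fderiv ℝ (fun z => ψ z t) y (Pi.single j 1)) x (Pi.single j 1)
      = ψ x t * ∑ j : Fin n,
          (fderiv ℝ (logFDeriv (uncurry ψ) (Pi.single j 1, 0)) (x, t) (Pi.single j 1, 0)
            + logFDeriv (uncurry ψ) (Pi.single j 1, 0) (x, t) ^ 2) := by
  rw [mul_sum]
  refine sum_congr rfl fun j _ => ?_
  rw [fderiv_fderiv_slice_left_apply hψ,
    fderiv_fderiv_apply_self (p := (x, t)) hψ.contDiffAt (hne x t)]
  rfl

theorem quantumPotential_eq_sum_logFDeriv (hψ : ContDiff ℝ 2 (uncurry ψ))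
    (hne : ∀ x t, ψ x t ≠ 0) {R Q : (Fin n → ℝ) → ℝ → ℝ}
    (hR : ∀ x t, R x t = ‖ψ x t‖)
    (hQ : ∀ x t, Q x t
        = -(∑ j : Fin n, fderiv ℝ
              (fun y => fderiv ℝ (fun z => R z t) y (Pi.single j 1)) x
              (Pi.single j 1)) / (2 * R x t)) (x : Fin n → ℝ) (t : ℝ) :
    Q x t = -(1 / 2) * ∑ j : Fin n,
      ((fderiv ℝ (logFDeriv (uncurry ψ) (Pi.single j 1, 0)) (x, t) (Pi.single j 1, 0)).re
        + (logFDeriv (uncurry ψ) (Pi.single j 1, 0) (x, t)).re ^ 2) := by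
  have hRψ : uncurry R = fun q => ‖uncurry ψ q‖ := funext fun q => hR q.1 q.2
  have hN : ContDiff ℝ 2 (uncurry R) := hRψ ▸ hψ.norm ℂ fun q => hne q.1 q.2
  have hD : ∀ j : Fin n,
      fderiv ℝ (fun y => fderiv ℝ (fun z => R z t) y (Pi.single j 1)) x (Pi.single j 1)
        = ‖ψ x t‖ * ((fderiv ℝ (logFDeriv (uncurry ψ) (Pi.single j 1, 0)) (x, t)
          (Pi.single j 1, 0)).re + (logFDeriv (uncurry ψ) (Pi.single j 1, 0) (x, t)).re ^ 2) := by
    intro j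
    rw [fderiv_fderiv_slice_left_apply hN, hRψ,
      fderiv_fderiv_norm_apply_self hψ (fun q => hne q.1 q.2)]
    rfl
  have hψx : ‖ψ x t‖ ≠ 0 := norm_ne_zero_iff.mpr (hne x t)
  rw [hQ, sum_congr rfl fun j _ => hD j, ← mul_sum, hR]
  field_simp

theorem I_mul_logFDeriv_time_eq (hψ : ContDiff ℝ 2 (uncurry ψ)) (hne : ∀ x t, ψ x t ≠ 0)
    {V : (Fin n → ℝ) → ℝ}
    (hSch : ∀ x t, Complex.I * deriv (fun s => ψ x s) t
        = -(1 / 2) * (∑ j : Fin n, fderiv ℝ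
              (fun y => fderiv ℝ (fun z => ψ z t) y (Pi.single j 1)) x
              (Pi.single j 1))
          + (V x : ℂ) * ψ x t) (x : Fin n → ℝ) (t : ℝ) :
    I * logFDeriv (uncurry ψ) (0, 1) (x, t) = -(1 / 2) * ∑ j : Fin n,
          (fderiv ℝ (logFDeriv (uncurry ψ) (Pi.single j 1, 0)) (x, t) (Pi.single j 1, 0)
            + logFDeriv (uncurry ψ) (Pi.single j 1, 0) (x, t) ^ 2) + V x := by
  have h := hSch x t
  rw [deriv_slice_right (hψ.differentiable two_ne_zero _),
    laplacian_eq_mul_sum_logFDeriv hψ hne] at h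
  have hψx := hne x t
  rw [logFDeriv, uncurry_apply_pair]
  field_simp
  linear_combination 2 * h

theorem quantum_hamilton_jacobi (hψ : ContDiff ℝ 2 (uncurry ψ)) (hne : ∀ x t, ψ x t ≠ 0)
    {V : (Fin n → ℝ) → ℝ} {R Q : (Fin n → ℝ) → ℝ → ℝ}
    (hR : ∀ x t, R x t = ‖ψ x t‖)
    (hQ : ∀ x t, Q x t
        = -(∑ j : Fin n, fderiv ℝ
              (fun y => fderiv ℝ (fun z => R z t) y (Pi.single j 1)) x
              (Pi.single j 1)) / (2 * R x t))
    (hSch : ∀ x t, Complex.I * deriv (fun s => ψ x s) t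
        = -(1 / 2) * (∑ j : Fin n, fderiv ℝ
              (fun y => fderiv ℝ (fun z => ψ z t) y (Pi.single j 1)) x
              (Pi.single j 1))
          + (V x : ℂ) * ψ x t) (x : Fin n → ℝ) (t : ℝ) :
    V x + Q x t = -((logFDeriv (uncurry ψ) (0, 1) (x, t)).im
      + (1 / 2) * ∑ k : Fin n, (logFDeriv (uncurry ψ) (Pi.single k 1, 0) (x, t)).im ^ 2) := by
  have h := congrArg Complex.re (I_mul_logFDeriv_time_eq hψ hne hSch x t)
  simp only [sq, mul_re, I_re, I_im, add_re, ofReal_re, re_sum, neg_re, neg_im,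
    div_ofNat_re, div_ofNat_im, one_re, one_im, zero_mul, one_mul, zero_sub, zero_div, neg_zero,
    sub_zero, sum_add_distrib, sum_sub_distrib] at h
  rw [quantumPotential_eq_sum_logFDeriv hψ hne hR hQ, sum_add_distrib]
  simp only [sq]
  linarith

theorem pB_eq_im_logFDeriv (hψ : ContDiff ℝ 2 (uncurry ψ))
    {pB : (Fin n → ℝ) → ℝ → Fin n → ℝ}
    (hpB : ∀ x t j, pB x t j
        = ((fderiv ℝ (fun y => ψ y t) x (Pi.single j 1)) / ψ x t).im)
    (x : Fin n → ℝ) (t : ℝ) (j : Fin n) :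
    pB x t j = (logFDeriv (uncurry ψ) (Pi.single j 1, 0) (x, t)).im := by
  rw [hpB, fderiv_slice_left_apply (hψ.differentiable two_ne_zero _)]
  rfl

theorem fderiv_pB_apply (hψ : ContDiff ℝ 2 (uncurry ψ)) (hne : ∀ x t, ψ x t ≠ 0)
    {pB : (Fin n → ℝ) → ℝ → Fin n → ℝ}
    (hpB : ∀ x t j, pB x t j
        = ((fderiv ℝ (fun y => ψ y t) x (Pi.single j 1)) / ψ x t).im)
    (x : Fin n → ℝ) (t : ℝ) (j k : Fin n) :
    fderiv ℝ (fun y => pB y t j) x (Pi.single k 1)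
      = fderiv ℝ (fun q => (logFDeriv (uncurry ψ) (Pi.single j 1, 0) q).im) (x, t)
          (Pi.single k 1, 0) := by
  simp_rw [pB_eq_im_logFDeriv hψ hpB]
  exact fderiv_slice_left_apply
    (f := fun y s => (logFDeriv (uncurry ψ) (Pi.single j 1, 0) (y, s)).im)
    (imCLM.differentiableAt.comp _ (differentiable_logFDeriv hψ (fun q => hne q.1 q.2) _ _)) _

theorem continuous_fderiv_pB_apply (hψ : ContDiff ℝ 2 (uncurry ψ)) (hne : ∀ x t, ψ x t ≠ 0)
    {pB : (Fin n → ℝ) → ℝ → Fin n → ℝ}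
    (hpB : ∀ x t j, pB x t j
        = ((fderiv ℝ (fun y => ψ y t) x (Pi.single j 1)) / ψ x t).im)
    {x : ℝ → Fin n → ℝ} (hx : Continuous x) (j k : Fin n) :
    Continuous fun t => fderiv ℝ (fun y => pB y t j) (x t) (Pi.single k 1) := by
  simp_rw [fderiv_pB_apply hψ hne hpB]
  have hC : ContDiff ℝ 1 fun q => (logFDeriv (uncurry ψ) (Pi.single j 1, 0) q).im :=
    imCLM.contDiff.comp (hψ.logFDeriv (m := 1) (by norm_num) (fun q => hne q.1 q.2) _)
  exact ((hC.continuous_fderiv one_ne_zero).clm_apply continuous_const).comp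
    (hx.prodMk continuous_id)

theorem hasDerivAt_mom_sub_pB (hψ : ContDiff ℝ 2 (uncurry ψ)) (hne : ∀ x t, ψ x t ≠ 0)
    {V : (Fin n → ℝ) → ℝ} {R Q : (Fin n → ℝ) → ℝ → ℝ}
    (hR : ∀ x t, R x t = ‖ψ x t‖)
    (hQ : ∀ x t, Q x t
        = -(∑ j : Fin n, fderiv ℝ
              (fun y => fderiv ℝ (fun z => R z t) y (Pi.single j 1)) x
              (Pi.single j 1)) / (2 * R x t))
    {pB : (Fin n → ℝ) → ℝ → Fin n → ℝ}
    (hpB : ∀ x t j, pB x t j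
        = ((fderiv ℝ (fun y => ψ y t) x (Pi.single j 1)) / ψ x t).im)
    (hSch : ∀ x t, Complex.I * deriv (fun s => ψ x s) t
        = -(1 / 2) * (∑ j : Fin n, fderiv ℝ
              (fun y => fderiv ℝ (fun z => ψ z t) y (Pi.single j 1)) x
              (Pi.single j 1))
          + (V x : ℂ) * ψ x t)
    {x mom : ℝ → Fin n → ℝ} {t : ℝ} {j : Fin n}
    (hx : ∀ k, HasDerivAt (fun s => x s k) (mom t k) t)
    (hmom : HasDerivAt (fun s => mom s j)
        (-(fderiv ℝ (fun y => V y + Q y t) (x t) (Pi.single j 1))) t) :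
    HasDerivAt (fun s => mom s j - pB (x s) s j)
      (-(∑ k : Fin n, fderiv ℝ (fun y => pB y t j) (x t) (Pi.single k 1)
          * (mom t k - pB (x t) t k))) t := by
  have hne' : ∀ q, uncurry ψ q ≠ 0 := fun q => hne q.1 q.2
  let π (v q : (Fin n → ℝ) × ℝ) : ℝ := (logFDeriv (uncurry ψ) v q).im
  have hπ : ∀ v, Differentiable ℝ (π v) := fun v =>
    imCLM.differentiable.comp (differentiable_logFDeriv hψ hne' v)
  simp_rw [fderiv_pB_apply hψ hne hpB, pB_eq_im_logFDeriv hψ hpB]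
  refine hasDerivAt_mom_sub_of_hamilton (W := π (0, 1)) (π := fun k => π (Pi.single k 1, 0))
    (hπ _ _) (fun k => hπ _ _) (fun k => fderiv_im_logFDeriv_comm hψ hne' _ _)
    (fderiv_im_logFDeriv_comm hψ hne' _ _) hx ?_
  rwa [show (fun y => V y + Q y t) = fun y => -(π (0, 1) (y, t) + (1 / 2) *
      ∑ k, π (Pi.single k 1, 0) (y, t) ^ 2) from
    funext fun y => quantum_hamilton_jacobi hψ hne hR hQ hSch y t, fderiv_fun_neg, neg_apply,
    neg_neg, fderiv_slice_left_apply
      (f := fun y s => π (0, 1) (y, s) + 1 / 2 * ∑ k, π (Pi.single k 1, 0) (y, s) ^ 2)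
      (by fun_prop)] at hmom

end Schrodinger

theorem stmt_15_general {n : ℕ} (ψ : (Fin n → ℝ) → ℝ → ℂ) (V : (Fin n → ℝ) → ℝ)
    (hψsm : ContDiff ℝ 3 (fun q : (Fin n → ℝ) × ℝ => ψ q.1 q.2))
    (hne : ∀ x t, ψ x t ≠ 0)
    (R : (Fin n → ℝ) → ℝ → ℝ)
    (hR : ∀ x t, R x t = ‖ψ x t‖)
    (Q : (Fin n → ℝ) → ℝ → ℝ)
    (hQ : ∀ x t, Q x t
        = -(∑ j : Fin n, fderiv ℝ
              (fun y => fderiv ℝ (fun z => R z t) y (Pi.single j 1)) x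
              (Pi.single j 1)) / (2 * R x t))
    (pB : (Fin n → ℝ) → ℝ → Fin n → ℝ)
    (hpB : ∀ x t j, pB x t j
        = ((fderiv ℝ (fun y => ψ y t) x (Pi.single j 1)) / ψ x t).im)
    (hSch : ∀ x t, Complex.I * deriv (fun s => ψ x s) t
        = -(1 / 2) * (∑ j : Fin n, fderiv ℝ
              (fun y => fderiv ℝ (fun z => ψ z t) y (Pi.single j 1)) x
              (Pi.single j 1))
          + (V x : ℂ) * ψ x t)
    (x : ℝ → Fin n → ℝ) (mom : ℝ → Fin n → ℝ)
    (hx : ∀ t j, HasDerivAt (fun s => x s j) (mom t j) t)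
    (hmom : ∀ t (j : Fin n), HasDerivAt (fun s => mom s j)
        (-(fderiv ℝ (fun y => V y + Q y t) (x t) (Pi.single j 1))) t) :
    (∀ t (j : Fin n),
      HasDerivAt (fun s => mom s j - pB (x s) s j)
        (-(∑ k : Fin n, fderiv ℝ (fun y => pB y t j) (x t) (Pi.single k 1)
            * (mom t k - pB (x t) t k))) t) ∧
    ((∀ j, mom 0 j = pB (x 0) 0 j) → ∀ t j, mom t j = pB (x t) t j) := by
  have hψ : ContDiff ℝ 2 (uncurry ψ) := hψsm.of_le (by norm_num)
  have hode := fun t j => hasDerivAt_mom_sub_pB hψ hne hR hQ hpB hSch (hx t) (hmom t j)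
  refine ⟨hode, fun h₀ t j => ?_⟩
  have hxc : Continuous x := continuous_pi fun k =>
    continuous_iff_continuousAt.2 fun s => (hx s k).continuousAt
  have hδ := eq_zero_of_hasDerivAt_mulVec (t₀ := 0)
    (A := fun t => Matrix.of fun j k => -fderiv ℝ (fun y => pB y t j) (x t) (Pi.single k 1))
    (g := fun s j => mom s j - pB (x s) s j)
    (continuous_matrix fun j k => (continuous_fderiv_pB_apply hψ hne hpB hxc j k).neg)
    (fun t => hasDerivAt_pi.2 fun j => by simpa [Matrix.mulVec, dotProduct] using hode t j)
    (funext fun j => sub_eq_zero.2 (h₀ j))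
  exact sub_eq_zero.1 (congrFun (congrFun hδ t) j)

/-- under the same hypotheses as theorem 4.2 (statement 14), if
`(x(t), mom(t))` is any solution of Hamilton's equations for
`h = (1/2)|π|² + V + Q_ψ`, then `δπ(t) = mom(t) − p_B(x(t),t)` satisfies the
linear ODE `d(δπ_j)/dt = −Σ_k ∂_k p_{B,j}(x(t),t)·δπ_k(t)`; in particular if
`mom(0) = p_B(x(0),0)` then `mom(t) = p_B(x(t),t)` for all `t`. -/
theorem stmt_15 {n : ℕ} (ψ : (Fin n → ℝ) → ℝ → ℂ) (V : (Fin n → ℝ) → ℝ)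
    (hψsm : ContDiff ℝ 3 (fun q : (Fin n → ℝ) × ℝ => ψ q.1 q.2))
    (hV : ContDiff ℝ 1 V)
    (hne : ∀ x t, ψ x t ≠ 0)
    (R : (Fin n → ℝ) → ℝ → ℝ)
    (hR : ∀ x t, R x t = ‖ψ x t‖)
    (Q : (Fin n → ℝ) → ℝ → ℝ)
    (hQ : ∀ x t, Q x t
        = -(∑ j : Fin n, fderiv ℝ
              (fun y => fderiv ℝ (fun z => R z t) y (Pi.single j 1)) x
              (Pi.single j 1)) / (2 * R x t))
    (pB : (Fin n → ℝ) → ℝ → Fin n → ℝ)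
    (hpB : ∀ x t j, pB x t j
        = ((fderiv ℝ (fun y => ψ y t) x (Pi.single j 1)) / ψ x t).im)
    (hSch : ∀ x t, Complex.I * deriv (fun s => ψ x s) t
        = -(1 / 2) * (∑ j : Fin n, fderiv ℝ
              (fun y => fderiv ℝ (fun z => ψ z t) y (Pi.single j 1)) x
              (Pi.single j 1))
          + (V x : ℂ) * ψ x t)
    (x : ℝ → Fin n → ℝ) (mom : ℝ → Fin n → ℝ)
    (hx : ∀ t j, HasDerivAt (fun s => x s j) (mom t j) t)
    (hmom : ∀ t (j : Fin n), HasDerivAt (fun s => mom s j)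
        (-(fderiv ℝ (fun y => V y + Q y t) (x t) (Pi.single j 1))) t) :
    (∀ t (j : Fin n),
      HasDerivAt (fun s => mom s j - pB (x s) s j)
        (-(∑ k : Fin n, fderiv ℝ (fun y => pB y t j) (x t) (Pi.single k 1)
            * (mom t k - pB (x t) t k))) t) ∧
    ((∀ j, mom 0 j = pB (x 0) 0 j) → ∀ t j, mom t j = pB (x t) t j) :=
  stmt_15_general ψ V hψsm hne R hR Q hQ pB hpB hSch x mom hx hmom
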